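/- (Corollary 2.4, addition theorem) Let q be a real number with 0 < q < 1, let α > 0 be real, let h be a positive integer, and let x ≥ 0 and y ≥ 0 be real. Then for every integer n ≥ 0, G̃_{n,q}^{(α,h)}(x+y) = ∑_{j=0}^{n} C(n,j) · q^{α(j-1)y} · G̃_{j,q}^{(α,h)}(x) · [y]_{q^α}^{n-j}, where C(n,j) denotes the binomial coefficient. -/
import Mathlib


/-- The `q`-number `[x]_q = (1 - q^x)/(1 - q)` (real exponent, via `rpow`). -/
noncomputable def qnum (q x : ℝ) : ℝ := (1 - q ^ x) / (1 - q)

/-- The weighted `(h,q)`-Genocchi polynomial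
`G̃_{n,q}^{(α,h)}(x) = n·[2]_q·∑_{m≥0} (-1)^m q^{mh} [m+x]_{q^α}^{n-1}`
(for `n = 0` the prefactor `n` makes it `0`). -/
noncomputable def hqGenocchi (q α : ℝ) (h n : ℕ) (x : ℝ) : ℝ :=
  (n : ℝ) * qnum q 2 *
    ∑' m : ℕ, (-1 : ℝ) ^ m * q ^ (m * h) * (qnum (q ^ α) ((m : ℝ) + x)) ^ (n - 1)

lemma qnum_add (Q a b : ℝ) (hQ : 0 < Q) (hQ1 : Q ≠ 1) :
    qnum Q (a + b) = qnum Q b + Q ^ b * qnum Q a := by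
  have h1 : (1 : ℝ) - Q ≠ 0 := sub_ne_zero.mpr (Ne.symm hQ1)
  unfold qnum
  rw [Real.rpow_add hQ]
  field_simp
  ring

lemma qnum_abs_le (Q t : ℝ) (h0 : 0 < Q) (h1 : Q < 1) (ht : 0 ≤ t) :
    |qnum Q t| ≤ 1 / (1 - Q) := by
  have h1Q : (0 : ℝ) < 1 - Q := by linarith
  have hpos : 0 < Q ^ t := Real.rpow_pos_of_pos h0 t
  have hle : Q ^ t ≤ 1 := Real.rpow_le_one h0.le h1.le ht
  have hnn : 0 ≤ qnum Q t := by
    unfold qnum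
    apply div_nonneg (by linarith) h1Q.le
  rw [abs_of_nonneg hnn]
  unfold qnum
  gcongr
  linarith

lemma genocchi_summable (q Q x : ℝ) (hq0 : 0 < q) (hq1 : q < 1) (hQ0 : 0 < Q) (hQ1 : Q < 1)
    (hx : 0 ≤ x) (h : ℕ) (hh : 0 < h) (k : ℕ) :
    Summable fun m : ℕ => (-1 : ℝ) ^ m * q ^ (m * h) * (qnum Q ((m : ℝ) + x)) ^ k := by
  apply Summable.of_abs
  refine Summable.of_nonneg_of_le (f := fun m : ℕ => (1 / (1 - Q)) ^ k * (q ^ h) ^ m)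
    (fun m => abs_nonneg _) ?_ ?_
  · intro m
    have hmx : (0 : ℝ) ≤ (m : ℝ) + x := add_nonneg (Nat.cast_nonneg m) hx
    have hb : |qnum Q ((m : ℝ) + x)| ≤ 1 / (1 - Q) := qnum_abs_le Q _ hQ0 hQ1 hmx
    have he : |(-1 : ℝ) ^ m * q ^ (m * h) * (qnum Q ((m : ℝ) + x)) ^ k|
        = (q ^ h) ^ m * |qnum Q ((m : ℝ) + x)| ^ k := by
      rw [abs_mul, abs_mul, abs_pow, abs_neg, abs_one, one_pow, one_mul, abs_pow,
        abs_of_pos hq0, mul_comm m h, pow_mul, abs_pow]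
    rw [he, mul_comm ((q ^ h) ^ m)]
    have h1Q : (0:ℝ) < 1 - Q := by linarith
    exact mul_le_mul (pow_le_pow_left₀ (abs_nonneg _) hb k) le_rfl (by positivity)
      (by positivity)
  · exact (summable_geometric_of_lt_one (by positivity)
      (pow_lt_one₀ hq0.le hq1 hh.ne')).mul_left _

theorem stmt7 (q α x y : ℝ) (hq0 : 0 < q) (hq1 : q < 1) (hα : 0 < α) (h : ℕ) (hh : 0 < h)
    (hx : 0 ≤ x) (hy : 0 ≤ y) (n : ℕ) :
    hqGenocchi q α h n (x + y) =
      ∑ j ∈ Finset.range (n + 1), (n.choose j : ℝ) * q ^ (α * ((j : ℝ) - 1) * y) *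
        hqGenocchi q α h j x * (qnum (q ^ α) y) ^ (n - j) := by
  have hQ0 : 0 < q ^ α := Real.rpow_pos_of_pos hq0 α
  have hQ1 : q ^ α < 1 := Real.rpow_lt_one hq0.le hq1 hα
  set Q := q ^ α with hQdef
  cases n with
  | zero => simp [hqGenocchi]
  | succ N =>
    -- abbreviations
    set u : ℕ → ℝ := fun m => qnum Q ((m : ℝ) + x) with hu
    have hT : ∀ k : ℕ, Summable fun m : ℕ => (-1 : ℝ) ^ m * q ^ (m * h) * (u m) ^ k :=
      fun k => genocchi_summable q Q x hq0 hq1 hQ0 hQ1 hx h hh k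
    -- pointwise binomial expansion
    have hpt : ∀ m : ℕ, (-1 : ℝ) ^ m * q ^ (m * h) * (qnum Q ((m : ℝ) + (x + y))) ^ N
        = ∑ k ∈ Finset.range (N + 1), (Q ^ y) ^ k * (qnum Q y) ^ (N - k) * (N.choose k : ℝ) *
            ((-1 : ℝ) ^ m * q ^ (m * h) * (u m) ^ k) := by
      intro m
      have hq : qnum Q ((m : ℝ) + (x + y)) = qnum Q y + Q ^ y * u m := by
        rw [← add_assoc]
        exact qnum_add Q _ y hQ0 hQ1.ne
      rw [hq, add_comm (qnum Q y), add_pow, Finset.mul_sum]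
      refine Finset.sum_congr rfl fun k hk => ?_
      rw [mul_pow]
      ring
    -- exchange sums
    have key : (∑' m : ℕ, (-1 : ℝ) ^ m * q ^ (m * h) * (qnum Q ((m : ℝ) + (x + y))) ^ N)
        = ∑ k ∈ Finset.range (N + 1), (Q ^ y) ^ k * (qnum Q y) ^ (N - k) * (N.choose k : ℝ) *
            ∑' m : ℕ, (-1 : ℝ) ^ m * q ^ (m * h) * (u m) ^ k := by
      rw [tsum_congr hpt, Summable.tsum_finsetSum fun k _ => (hT k).mul_left _]
      exact Finset.sum_congr rfl fun k _ => tsum_mul_left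
    -- rewrite LHS
    have hLHS : hqGenocchi q α h (N + 1) (x + y)
        = ∑ k ∈ Finset.range (N + 1), ((N + 1 : ℕ) : ℝ) * qnum q 2 *
            ((Q ^ y) ^ k * (qnum Q y) ^ (N - k) * (N.choose k : ℝ) *
              ∑' m : ℕ, (-1 : ℝ) ^ m * q ^ (m * h) * (u m) ^ k) := by
      rw [hqGenocchi]
      simp only [Nat.add_sub_cancel, ← hQdef]
      rw [key, Finset.mul_sum]
    rw [hLHS]
    conv_rhs => rw [Finset.sum_range_succ']
    -- the j = 0 term vanishes
    have h0 : (((N+1).choose 0 : ℝ)) * q ^ (α * (((0:ℕ) : ℝ) - 1) * y) *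
        hqGenocchi q α h 0 x * (qnum Q y) ^ (N + 1 - 0) = 0 := by
      simp [hqGenocchi]
    rw [h0, add_zero]
    refine Finset.sum_congr rfl fun k hk => ?_
    -- term-by-term equality
    have hqpow : q ^ (α * (((k : ℝ) + 1) - 1) * y) = (Q ^ y) ^ k := by
      have he : α * (((k : ℝ) + 1) - 1) * y = α * (y * (k : ℝ)) := by ring
      rw [he, Real.rpow_mul hq0.le, ← hQdef, Real.rpow_mul hQ0.le, Real.rpow_natCast]
    have hc : (N+1) * N.choose k = (N+1).choose (k+1) * (k+1) := Nat.add_one_mul_choose_eq N k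
    have hchoose : ((N : ℝ) + 1) * (N.choose k : ℝ) = (((N+1).choose (k+1) : ℝ)) * ((k : ℝ) + 1) := by
      exact_mod_cast hc
    rw [hqGenocchi]
    push_cast
    simp only [Nat.add_sub_cancel, Nat.succ_sub_succ, ← hQdef]
    rw [hqpow]
    simp only [hu]
    linear_combination (qnum q 2 * (Q ^ y) ^ k * qnum Q y ^ (N - k) *
      (∑' m : ℕ, (-1 : ℝ) ^ m * q ^ (m * h) * qnum Q ((m : ℝ) + x) ^ k)) * hchoose
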